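/- Let A, B, c ∈ ℝ with A² + B² = 1 and let ε = ±1. Then the function ω : ℝ² → ℝ defined by ω(u,v) := 2ε·arctan(exp(A·u + B·v + c)) is smooth and satisfies the elliptic sine-Gordon equation ∂²ω/∂v² + ∂²ω/∂u² = cos ω · sin ω at every point of ℝ². -/

import Mathlib

/-- Partial derivative with respect to the first variable `u`. -/
noncomputable def pdu (f : ℝ × ℝ → ℝ) (p : ℝ × ℝ) : ℝ :=
  deriv (fun u => f (u, p.2)) p.1

/-- Partial derivative with respect to the second variable `v`. -/
noncomputable def pdv (f : ℝ × ℝ → ℝ) (p : ℝ × ℝ) : ℝ :=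
  deriv (fun v => f (p.1, v)) p.2

lemma sG_hasDerivAt_first (e k d t : ℝ) :
    HasDerivAt (fun s => 2 * e * Real.arctan (Real.exp (k * s + d)))
      (2 * e * k * Real.exp (k * t + d) / (1 + Real.exp (k * t + d) ^ 2)) t := by
  have h1 : HasDerivAt (fun s : ℝ => k * s + d) k t := by
    simpa using ((hasDerivAt_id t).const_mul k).add_const d
  have h2 := h1.exp
  have h3 := (Real.hasDerivAt_arctan (Real.exp (k * t + d))).comp t h2
  have h4 := h3.const_mul (2 * e)
  refine h4.congr_deriv ?_
  ring

lemma sG_hasDerivAt_second (C k d t : ℝ) :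
    HasDerivAt (fun s => C * k * Real.exp (k * s + d) / (1 + Real.exp (k * s + d) ^ 2))
      (C * k ^ 2 * Real.exp (k * t + d) * (1 - Real.exp (k * t + d) ^ 2)
        / (1 + Real.exp (k * t + d) ^ 2) ^ 2) t := by
  have h1 : HasDerivAt (fun s : ℝ => k * s + d) k t := by
    simpa using ((hasDerivAt_id t).const_mul k).add_const d
  have h2 := h1.exp
  have hnum : HasDerivAt (fun s => C * k * Real.exp (k * s + d))
      (C * k * (Real.exp (k * t + d) * k)) t := h2.const_mul (C * k)
  have hden : HasDerivAt (fun s => 1 + Real.exp (k * s + d) ^ 2)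
      (2 * Real.exp (k * t + d) ^ 1 * (Real.exp (k * t + d) * k)) t := by
    simpa using (h2.pow 2).const_add 1
  have hne : (1 + Real.exp (k * t + d) ^ 2) ≠ 0 := by positivity
  have := hnum.div hden hne
  refine this.congr_deriv ?_
  ring

theorem oneSoliton_elliptic_sineGordon
    (A B c ε : ℝ) (hAB : A ^ 2 + B ^ 2 = 1) (hε : ε = 1 ∨ ε = -1)
    (ω : ℝ × ℝ → ℝ)
    (hω : ω = fun p : ℝ × ℝ => 2 * ε * Real.arctan (Real.exp (A * p.1 + B * p.2 + c))) :
    ContDiff ℝ (⊤ : ℕ∞) ω ∧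
      ∀ p : ℝ × ℝ,
        pdv (pdv ω) p + pdu (pdu ω) p = Real.cos (ω p) * Real.sin (ω p) := by
  have hpdu : pdu ω = fun p : ℝ × ℝ =>
      2 * ε * A * Real.exp (A * p.1 + B * p.2 + c)
        / (1 + Real.exp (A * p.1 + B * p.2 + c) ^ 2) := by
    funext p
    unfold pdu
    rw [hω]
    have heq : (fun u => 2 * ε * Real.arctan (Real.exp (A * u + B * p.2 + c)))
        = fun u => 2 * ε * Real.arctan (Real.exp (A * u + (B * p.2 + c))) := by
      funext u; ring_nf
    rw [heq, (sG_hasDerivAt_first ε A (B * p.2 + c) p.1).deriv]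
    ring_nf
  have hpdv : pdv ω = fun p : ℝ × ℝ =>
      2 * ε * B * Real.exp (A * p.1 + B * p.2 + c)
        / (1 + Real.exp (A * p.1 + B * p.2 + c) ^ 2) := by
    funext p
    unfold pdv
    rw [hω]
    have heq : (fun v => 2 * ε * Real.arctan (Real.exp (A * p.1 + B * v + c)))
        = fun v => 2 * ε * Real.arctan (Real.exp (B * v + (A * p.1 + c))) := by
      funext v; ring_nf
    rw [heq, (sG_hasDerivAt_first ε B (A * p.1 + c) p.2).deriv]
    ring_nf
  have hpduu : ∀ p : ℝ × ℝ, pdu (pdu ω) p =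
      2 * ε * A ^ 2 * Real.exp (A * p.1 + B * p.2 + c)
        * (1 - Real.exp (A * p.1 + B * p.2 + c) ^ 2)
        / (1 + Real.exp (A * p.1 + B * p.2 + c) ^ 2) ^ 2 := by
    intro p
    show deriv (fun u => pdu ω (u, p.2)) p.1 = _
    rw [hpdu]
    have heq : (fun u => 2 * ε * A * Real.exp (A * u + B * p.2 + c)
        / (1 + Real.exp (A * u + B * p.2 + c) ^ 2))
        = fun u => 2 * ε * A * Real.exp (A * u + (B * p.2 + c))
        / (1 + Real.exp (A * u + (B * p.2 + c)) ^ 2) := by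
      funext u; ring_nf
    rw [heq, (sG_hasDerivAt_second (2 * ε) A (B * p.2 + c) p.1).deriv]
    ring_nf
  have hpdvv : ∀ p : ℝ × ℝ, pdv (pdv ω) p =
      2 * ε * B ^ 2 * Real.exp (A * p.1 + B * p.2 + c)
        * (1 - Real.exp (A * p.1 + B * p.2 + c) ^ 2)
        / (1 + Real.exp (A * p.1 + B * p.2 + c) ^ 2) ^ 2 := by
    intro p
    show deriv (fun v => pdv ω (p.1, v)) p.2 = _
    rw [hpdv]
    have heq : (fun v => 2 * ε * B * Real.exp (A * p.1 + B * v + c)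
        / (1 + Real.exp (A * p.1 + B * v + c) ^ 2))
        = fun v => 2 * ε * B * Real.exp (B * v + (A * p.1 + c))
        / (1 + Real.exp (B * v + (A * p.1 + c)) ^ 2) := by
      funext v; ring_nf
    rw [heq, (sG_hasDerivAt_second (2 * ε) B (A * p.1 + c) p.2).deriv]
    ring_nf
  constructor
  · rw [hω]
    have hlin : ContDiff ℝ (⊤ : ℕ∞) fun p : ℝ × ℝ => A * p.1 + B * p.2 + c := by fun_prop
    exact contDiff_const.mul (Real.contDiff_arctan.comp (Real.contDiff_exp.comp hlin))
  · intro p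
    rw [hpduu, hpdvv, hω]
    set g := Real.exp (A * p.1 + B * p.2 + c) with hg
    have hgpos : (0:ℝ) < g := Real.exp_pos _
    have hpos : (0:ℝ) < 1 + g ^ 2 := by positivity
    have hsq : Real.sqrt (1 + g ^ 2) ^ 2 = 1 + g ^ 2 := Real.sq_sqrt hpos.le
    have hsne : Real.sqrt (1 + g ^ 2) ≠ 0 := by positivity
    have hcos : Real.cos (2 * Real.arctan g) = (1 - g ^ 2) / (1 + g ^ 2) := by
      rw [Real.cos_two_mul, Real.cos_arctan]
      rw [div_pow, one_pow, hsq]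
      field_simp
      ring
    have hsin : Real.sin (2 * Real.arctan g) = 2 * g / (1 + g ^ 2) := by
      rw [Real.sin_two_mul, Real.sin_arctan, Real.cos_arctan]
      rw [mul_assoc, div_mul_div_comm, Real.mul_self_sqrt hpos.le, mul_one]
      ring
    rcases hε with rfl | rfl
    · have h2 : (2:ℝ) * 1 * Real.arctan g = 2 * Real.arctan g := by ring
      simp only [← hg, h2, hcos, hsin]
      have hAB' : B ^ 2 = 1 - A ^ 2 := by linarith
      rw [hAB']
      field_simp
      ring
    · have h2 : (2:ℝ) * (-1) * Real.arctan g = -(2 * Real.arctan g) := by ring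
      simp only [← hg, h2, Real.cos_neg, Real.sin_neg, hcos, hsin]
      have hAB' : B ^ 2 = 1 - A ^ 2 := by linarith
      rw [hAB']
      field_simp
      ring
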